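/- Let N ≥ 1, let 𝒴₀, …, 𝒴_{N−1} be ℂ-linear subspaces of the p₂×p₁ complex matrices, and let T1 : 𝕋 → Matrix q₁ p₁ ℂ, T2 : 𝕋 → Matrix q₁ p₂ ℂ be continuous. Suppose U_i : 𝕋 → Matrix q₁ p₂ ℂ is continuous, inner, and in H∞, and U_o : 𝕋 → Matrix p₂ p₂ ℂ is continuous, in H∞, pointwise invertible with inverse in H∞, with T2 = U_i·U_o pointwise. Define Y := (I − U_iU_i^∼)T1. Suppose for every γ > ‖Y‖∞ we are given a continuous pointwise-invertible Y_{o,γ} with Y_{o,γ}, Y_{o,γ}⁻¹ ∈ H∞ and Y_{o,γ}ᴴY_{o,γ} = γ²·I − YᴴY pointwise; set R_γ := U_i^∼·T1·Y_{o,γ}⁻¹, and for matrices V₀, …, V_{N−1} with V(z) := Σ_{i=0}^{N−1} V_i·z^{−i}, set R̂_γ(V)(z) := z^N·R_γ(z) − U_o(z)·(z^N·V(z))·Y_{o,γ}(z)⁻¹. Then inf{‖(T1 − T2·V) − (z^{−N}·T2)·D‖∞ : V_i ∈ 𝒴_i for all i, D : 𝕋 → Matrix p₂ p₁ ℂ continuous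 with D ∈ H∞} = inf{γ : γ > ‖Y‖∞ and there exist V₀ ∈ 𝒴₀, …, V_{N−1} ∈ 𝒴_{N−1} with dist(R̂_γ(V), H∞) < 1}. -/

import Mathlib

open Matrix

/-- The spectral norm (ℓ²→ℓ² operator norm, largest singular value) of a complex matrix. -/
noncomputable def specNorm {m n : Type*} [Fintype m] [Fintype n] [DecidableEq n]
    (M : Matrix m n ℂ) : ℝ :=
  ‖LinearMap.toContinuousLinearMap (Matrix.toEuclideanLin M)‖

/-- The `H∞` norm of a matrix-valued function on the unit circle:
`‖F‖∞ = sup_{z ∈ 𝕋} ‖F(z)‖`. -/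
noncomputable def hinfNorm {m n : Type*} [Fintype m] [Fintype n] [DecidableEq n]
    (F : Circle → Matrix m n ℂ) : ℝ :=
  ⨆ z : Circle, specNorm (F z)

/-- A matrix-valued function `F` on the unit circle belongs to `H∞` if there is a
matrix-valued function `G`, continuous on the closed unit disc and analytic on the open
unit disc, with `F(z) = G(z⁻¹)` for all `z` on the circle. -/
def MemHInf {m n : Type*} (F : Circle → Matrix m n ℂ) : Prop :=
  ∃ G : ℂ → Matrix m n ℂ,
    (∀ i j, ContinuousOn (fun w => G w i j) (Metric.closedBall (0 : ℂ) 1)) ∧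
    (∀ i j, AnalyticOn ℂ (fun w => G w i j) (Metric.ball (0 : ℂ) 1)) ∧
    (∀ z : Circle, F z = G ((z : ℂ)⁻¹))

/-- The distance from `R` to `H∞` in the `‖·‖∞` norm:
`dist(R, H∞) = inf { ‖R − X‖∞ : X continuous, X ∈ H∞ }`. -/
noncomputable def distHInf {m n : Type*} [Fintype m] [Fintype n] [DecidableEq n]
    (R : Circle → Matrix m n ℂ) : ℝ :=
  sInf {c : ℝ | ∃ X : Circle → Matrix m n ℂ,
    Continuous X ∧ MemHInf X ∧ c = hinfNorm fun z => R z - X z}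

/-!
Write `A = (T1 - T2 V) - z⁻ᴺ T2 D`. As `Ui` is inner, `A` splits orthogonally into
`Ui Uiᴴ A` and `(1 - Ui Uiᴴ) A = Y`, so `Aᴴ A = Mᴴ M + Yᴴ Y` with `M = zᴺ Uiᴴ A`. Together with
`Yoᴴ Yo = γ² - Yᴴ Y` this makes `‖A(z)‖ ≤ γ` equivalent to `‖M(z) Yo(z)⁻¹‖ ≤ 1`, and more
precisely `‖A(z)‖ ≤ c < γ` forces `‖M(z) Yo(z)⁻¹‖ ≤ c / γ`. Since `Uo` and `Yo` are units of `H∞`,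
`X = Uo D Yo⁻¹` ranges over all continuous `H∞` functions as `D` does, and
`R̂_γ(V) - X = M Yo⁻¹`. So every admissible `γ` bounds an attained error, and every `γ` above an
attained error is admissible: the two infima coincide.
-/

namespace Matrix

variable {α m n k : Type*} [CommRing α] [StarRing α] [Fintype k]

theorem conjTranspose_smul_mul_smul_self {u : α} (hu : star u * u = 1) (B : Matrix k n α) :
    (u • B)ᴴ * (u • B) = Bᴴ * B := by
  rw [conjTranspose_smul, Matrix.smul_mul, Matrix.mul_smul, smul_smul, hu, one_smul]

variable [Fintype m] [DecidableEq k]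

theorem conjTranspose_mul_sub_mul_of_isometry {U : Matrix m k α} (hU : Uᴴ * U = 1)
    (T : Matrix m n α) (G : Matrix k n α) : Uᴴ * (T - U * G) = Uᴴ * T - G := by
  rw [Matrix.mul_sub, ← Matrix.mul_assoc, hU, Matrix.one_mul]

variable [DecidableEq m]

theorem one_sub_mul_conjTranspose_mul_sub_mul_of_isometry {U : Matrix m k α} (hU : Uᴴ * U = 1)
    (T : Matrix m n α) (G : Matrix k n α) :
    (1 - U * Uᴴ) * (T - U * G) = (1 - U * Uᴴ) * T := by
  have hPU : (1 - U * Uᴴ) * U = 0 := by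
    rw [Matrix.sub_mul, Matrix.one_mul, Matrix.mul_assoc, hU, Matrix.mul_one, sub_self]
  rw [Matrix.mul_sub, ← Matrix.mul_assoc, hPU, Matrix.zero_mul, sub_zero]

theorem conjTranspose_mul_self_eq_add_of_isometry {U : Matrix m k α} (hU : Uᴴ * U = 1)
    (A : Matrix m n α) :
    Aᴴ * A = (Uᴴ * A)ᴴ * (Uᴴ * A) + ((1 - U * Uᴴ) * A)ᴴ * ((1 - U * Uᴴ) * A) := by
  have hP : (1 - U * Uᴴ)ᴴ * (1 - U * Uᴴ) = 1 - U * Uᴴ := by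
    rw [conjTranspose_sub, conjTranspose_one, conjTranspose_mul, conjTranspose_conjTranspose,
      Matrix.sub_mul, Matrix.one_mul, Matrix.mul_sub, Matrix.mul_one, Matrix.mul_assoc U,
      ← Matrix.mul_assoc Uᴴ, hU, Matrix.one_mul, sub_self, sub_zero]
  rw [conjTranspose_mul, conjTranspose_mul, conjTranspose_conjTranspose, Matrix.mul_assoc,
    Matrix.mul_assoc Aᴴ, ← Matrix.mul_assoc (1 - U * Uᴴ)ᴴ, hP, ← Matrix.mul_assoc U,
    ← Matrix.mul_add, ← Matrix.add_mul, add_sub_cancel, Matrix.one_mul]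

end Matrix

open scoped Matrix.Norms.L2Operator

namespace Matrix

variable {l m n k : Type*} [Fintype l] [Fintype m] [Fintype n] [Fintype k] [DecidableEq n]

theorem norm_toEuclideanLin_apply_le (A : Matrix m n ℂ) (x : EuclideanSpace ℂ n) :
    ‖toEuclideanLin A x‖ ≤ ‖A‖ * ‖x‖ :=
  (LinearMap.toContinuousLinearMap (toEuclideanLin A)).le_opNorm x

theorem norm_le_of_forall_norm_toEuclideanLin_apply_le {A : Matrix m n ℂ} {c : ℝ} (hc : 0 ≤ c)
    (h : ∀ x, ‖toEuclideanLin A x‖ ≤ c * ‖x‖) : ‖A‖ ≤ c :=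
  ContinuousLinearMap.opNorm_le_bound _ hc h

variable [DecidableEq l] [DecidableEq m] [DecidableEq k]

theorem norm_toEuclideanLin_apply_sq (A : Matrix m n ℂ) (x : EuclideanSpace ℂ n) :
    ‖toEuclideanLin A x‖ ^ 2 = RCLike.re (inner ℂ x (toEuclideanLin (Aᴴ * A) x)) := by
  rw [toLpLin_mul_same, LinearMap.comp_apply, toEuclideanLin_conjTranspose_eq_adjoint,
    LinearMap.adjoint_inner_right, inner_self_eq_norm_sq]

theorem norm_toEuclideanLin_apply_sq_eq_add {A : Matrix m n ℂ} {B : Matrix l n ℂ}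
    {C : Matrix k n ℂ} (h : Aᴴ * A = Bᴴ * B + Cᴴ * C) (x : EuclideanSpace ℂ n) :
    ‖toEuclideanLin A x‖ ^ 2 = ‖toEuclideanLin B x‖ ^ 2 + ‖toEuclideanLin C x‖ ^ 2 := by
  simp only [norm_toEuclideanLin_apply_sq, h, map_add, LinearMap.add_apply, inner_add_right]

theorem norm_toEuclideanLin_apply_sq_eq_sub {A : Matrix m n ℂ} {B : Matrix l n ℂ} {γ : ℝ}
    (h : Aᴴ * A = (γ : ℂ) ^ 2 • (1 : Matrix n n ℂ) - Bᴴ * B) (x : EuclideanSpace ℂ n) :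
    ‖toEuclideanLin A x‖ ^ 2 = γ ^ 2 * ‖x‖ ^ 2 - ‖toEuclideanLin B x‖ ^ 2 := by
  have hγ : ((γ : ℂ) • (1 : Matrix n n ℂ))ᴴ * ((γ : ℂ) • 1) = Aᴴ * A + Bᴴ * B := by
    rw [h, conjTranspose_smul, conjTranspose_one, Complex.star_def, Complex.conj_ofReal,
      smul_mul_smul_comm, mul_one, sub_add_cancel, pow_two]
  have hγx : ‖toEuclideanLin ((γ : ℂ) • (1 : Matrix n n ℂ)) x‖ = |γ| * ‖x‖ := by
    rw [map_smul, LinearMap.smul_apply, norm_smul, Complex.norm_real, Real.norm_eq_abs,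
      toLpLin_one, LinearMap.id_apply]
  have := norm_toEuclideanLin_apply_sq_eq_add hγ x
  rw [hγx, mul_pow, sq_abs] at this
  linarith

theorem norm_le_of_conjTranspose_mul_self_eq_add {A : Matrix m n ℂ} {M : Matrix l n ℂ}
    {Y : Matrix k n ℂ} (h : Aᴴ * A = Mᴴ * M + Yᴴ * Y) : ‖Y‖ ≤ ‖A‖ := by
  refine norm_le_of_forall_norm_toEuclideanLin_apply_le (norm_nonneg A) fun x => ?_
  have hsplit := norm_toEuclideanLin_apply_sq_eq_add h x
  have hA := pow_le_pow_left₀ (norm_nonneg _) (norm_toEuclideanLin_apply_le A x) 2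
  refine (sq_le_sq₀ (norm_nonneg _) (by positivity)).1 ?_
  nlinarith [norm_nonneg (toEuclideanLin M x)]

/-- Here `‖A x‖² = ‖M x‖² + γ² ‖x‖² - ‖Yo x‖²`, so `‖A‖ ≤ γ` and `‖M Yo⁻¹‖ ≤ 1` are two
readings of the same inequality; `norm_mul_inv_le_div` is the quantitative converse. -/
theorem norm_le_of_norm_mul_inv_le_one {A : Matrix m n ℂ} {M : Matrix l n ℂ} {Y : Matrix k n ℂ}
    {Yo : Matrix n n ℂ} {γ : ℝ} (hγ : 0 ≤ γ) (h : Aᴴ * A = Mᴴ * M + Yᴴ * Y)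
    (hYo : Yoᴴ * Yo = (γ : ℂ) ^ 2 • (1 : Matrix n n ℂ) - Yᴴ * Y) (hu : IsUnit Yo)
    (hle : ‖M * Yo⁻¹‖ ≤ 1) : ‖A‖ ≤ γ := by
  refine norm_le_of_forall_norm_toEuclideanLin_apply_le hγ fun x => ?_
  have hMx : ‖toEuclideanLin M x‖ ≤ ‖toEuclideanLin Yo x‖ := by
    have := norm_toEuclideanLin_apply_le (M * Yo⁻¹) (toEuclideanLin Yo x)
    rw [← LinearMap.comp_apply, ← toLpLin_mul_same,
      nonsing_inv_mul_cancel_right _ _ ((isUnit_iff_isUnit_det _).mp hu)] at this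
    nlinarith [norm_nonneg (toEuclideanLin Yo x)]
  have hsplit := norm_toEuclideanLin_apply_sq_eq_add h x
  have hYox := norm_toEuclideanLin_apply_sq_eq_sub hYo x
  refine (sq_le_sq₀ (norm_nonneg _) (by positivity)).1 ?_
  nlinarith [norm_nonneg (toEuclideanLin M x)]

theorem norm_mul_inv_le_div {A : Matrix m n ℂ} {M : Matrix l n ℂ} {Y : Matrix k n ℂ}
    {Yo : Matrix n n ℂ} {γ c : ℝ} (hγ : 0 < γ) (hcγ : c ≤ γ) (h : Aᴴ * A = Mᴴ * M + Yᴴ * Y)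
    (hYo : Yoᴴ * Yo = (γ : ℂ) ^ 2 • (1 : Matrix n n ℂ) - Yᴴ * Y) (hu : IsUnit Yo)
    (hA : ‖A‖ ≤ c) : ‖M * Yo⁻¹‖ ≤ c / γ := by
  have hc : 0 ≤ c := (norm_nonneg A).trans hA
  refine norm_le_of_forall_norm_toEuclideanLin_apply_le (div_nonneg hc hγ.le) fun y => ?_
  set x := toEuclideanLin Yo⁻¹ y
  have hy : toEuclideanLin Yo x = y := by
    rw [← LinearMap.comp_apply, ← toLpLin_mul_same,
      mul_nonsing_inv _ ((isUnit_iff_isUnit_det _).mp hu), toLpLin_one, LinearMap.id_apply]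
  have hMy : toEuclideanLin (M * Yo⁻¹) y = toEuclideanLin M x := by
    rw [toLpLin_mul_same, LinearMap.comp_apply]
  have hsplit := norm_toEuclideanLin_apply_sq_eq_add h x
  have hYox := norm_toEuclideanLin_apply_sq_eq_sub hYo x
  have hAx := pow_le_pow_left₀ (norm_nonneg _)
    ((norm_toEuclideanLin_apply_le A x).trans (mul_le_mul_of_nonneg_right hA (norm_nonneg x))) 2
  rw [hy] at hYox
  rw [hMy, div_mul_eq_mul_div, le_div_iff₀ hγ]
  refine (sq_le_sq₀ (by positivity) (by positivity)).1 ?_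
  -- `γ² ‖M x‖² = γ² (‖A x‖² - ‖Y x‖²) ≤ c² γ² ‖x‖² - c² ‖Y x‖² = c² ‖y‖²`
  have hc2 : c ^ 2 ≤ γ ^ 2 := pow_le_pow_left₀ hc hcγ 2
  nlinarith [sq_nonneg ‖toEuclideanLin Y x‖, sq_nonneg ‖x‖]

end Matrix

theorem Continuous.matrix_inv {X n R : Type*} [TopologicalSpace X] [Fintype n] [DecidableEq n]
    [NormedCommRing R] [CompleteSpace R] {F : X → Matrix n n R} (hF : Continuous F)
    (hu : ∀ x, IsUnit (F x)) : Continuous fun x => (F x)⁻¹ :=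
  continuous_iff_continuousAt.2 fun x =>
    (continuousAt_matrix_inv _ (NormedRing.inverse_continuousAt
      ((isUnit_iff_isUnit_det _).mp (hu x)).unit)).comp hF.continuousAt

theorem memHInf_zero {m n : Type*} : MemHInf fun _ : Circle => (0 : Matrix m n ℂ) :=
  ⟨fun _ => 0, fun _ _ => continuousOn_const, fun _ _ => analyticOn_const, fun _ => rfl⟩

theorem MemHInf.mul {l m n : Type*} [Fintype n] {F : Circle → Matrix m n ℂ}
    {G : Circle → Matrix n l ℂ} (hF : MemHInf F) (hG : MemHInf G) :
    MemHInf fun z => F z * G z := by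
  obtain ⟨P, hPc, hPa, hPF⟩ := hF
  obtain ⟨Q, hQc, hQa, hQG⟩ := hG
  refine ⟨fun w => P w * Q w, fun i j => ?_, fun i j => ?_,
    fun z => congrArg₂ (· * ·) (hPF z) (hQG z)⟩
  · simp only [mul_apply]
    exact continuousOn_finsetSum _ fun c _ => (hPc i c).mul (hQc c j)
  · simp only [mul_apply]
    exact Finset.analyticOn_fun_sum _ fun c _ => (hPa i c).mul (hQa c j)

section CircleFunctions

variable {m n : Type*} [Fintype m] [Fintype n] [DecidableEq n]

theorem specNorm_eq_norm (M : Matrix m n ℂ) : specNorm M = ‖M‖ := rfl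

theorem continuous_specNorm {X : Type*} [TopologicalSpace X] {F : X → Matrix m n ℂ}
    (hF : Continuous F) : Continuous fun x => specNorm (F x) :=
  (continuous_norm (E := Matrix m n ℂ)).comp hF

theorem specNorm_le_hinfNorm {F : Circle → Matrix m n ℂ} (hF : Continuous F) (z : Circle) :
    specNorm (F z) ≤ hinfNorm F :=
  le_ciSup (isCompact_range (continuous_specNorm hF)).bddAbove z

theorem hinfNorm_le {F : Circle → Matrix m n ℂ} {c : ℝ} (h : ∀ z, specNorm (F z) ≤ c) :
    hinfNorm F ≤ c :=
  ciSup_le h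

theorem hinfNorm_nonneg (F : Circle → Matrix m n ℂ) : 0 ≤ hinfNorm F :=
  Real.iSup_nonneg fun _ => norm_nonneg _

theorem distHInf_le {R X : Circle → Matrix m n ℂ} (hXc : Continuous X) (hXH : MemHInf X) :
    distHInf R ≤ hinfNorm fun z => R z - X z :=
  csInf_le ⟨0, by rintro c ⟨X, -, -, rfl⟩; exact hinfNorm_nonneg _⟩ ⟨X, hXc, hXH, rfl⟩

theorem exists_hinfNorm_sub_lt_of_distHInf_lt {R : Circle → Matrix m n ℂ} {a : ℝ}
    (h : distHInf R < a) :
    ∃ X : Circle → Matrix m n ℂ, Continuous X ∧ MemHInf X ∧ (hinfNorm fun z => R z - X z) < a := by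
  obtain ⟨c, ⟨X, hXc, hXH, rfl⟩, hca⟩ :=
    exists_lt_of_csInf_lt (by exact ⟨_, 0, continuous_const, memHInf_zero, rfl⟩) h
  exact ⟨X, hXc, hXH, hca⟩

end CircleFunctions

theorem csInf_eq_csInf_of_forall_exists_le_of_Ioi_subset {α : Type*}
    [ConditionallyCompleteLinearOrder α] [DenselyOrdered α] [NoMaxOrder α] {S T : Set α}
    (hS : S.Nonempty) (hSb : BddBelow S) (hTS : ∀ t ∈ T, ∃ s ∈ S, s ≤ t)
    (hST : ∀ s ∈ S, Set.Ioi s ⊆ T) : sInf S = sInf T := by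
  obtain ⟨b, hb⟩ := hSb
  have hTb : BddBelow T := ⟨b, fun t ht => by
    obtain ⟨s, hs, hst⟩ := hTS t ht
    exact (hb hs).trans hst⟩
  obtain ⟨s₀, hs₀⟩ := hS
  obtain ⟨t₀, ht₀⟩ := exists_gt s₀
  refine le_antisymm (le_csInf ⟨t₀, hST s₀ hs₀ ht₀⟩ fun t ht => ?_)
    (le_csInf ⟨s₀, hs₀⟩ fun s hs => ?_)
  · obtain ⟨s, hs, hst⟩ := hTS t ht
    exact (csInf_le ⟨b, hb⟩ hs).trans hst
  · exact le_of_forall_gt_imp_ge_of_dense fun t hst => csInf_le hTb (hST s hs hst)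

noncomputable section DelayedModelMatching

variable {N : ℕ} {m n k : Type*} {T1 : Circle → Matrix m n ℂ} {T2 Ui : Circle → Matrix m k ℂ}
  {Uo : Circle → Matrix k k ℂ} {Yo : Circle → Matrix n n ℂ} {V : Fin N → Matrix k n ℂ}
  {D : Circle → Matrix k n ℂ} {γ : ℝ}

def firFilter (V : Fin N → Matrix k n ℂ) (z : Circle) : Matrix k n ℂ :=
  ∑ i : Fin N, ((z : ℂ)⁻¹) ^ (i : ℕ) • V i

theorem continuous_firFilter (V : Fin N → Matrix k n ℂ) : Continuous (firFilter V) :=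
  continuous_finsetSum _ fun _ _ =>
    ((continuous_subtype_val.inv₀ Circle.coe_ne_zero).pow _).smul continuous_const

variable [Fintype k]

def delayedError (T1 : Circle → Matrix m n ℂ) (T2 : Circle → Matrix m k ℂ)
    (V : Fin N → Matrix k n ℂ) (D : Circle → Matrix k n ℂ) (z : Circle) : Matrix m n ℂ :=
  (T1 z - T2 z * firFilter V z) - ((z : ℂ)⁻¹ ^ N • T2 z) * D z

theorem continuous_delayedError (hT1 : Continuous T1) (hT2 : Continuous T2) (hD : Continuous D) :
    Continuous (delayedError T1 T2 V D) :=
  (hT1.sub (hT2.matrix_mul (continuous_firFilter V))).sub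
    ((((continuous_subtype_val.inv₀ Circle.coe_ne_zero).pow N).smul hT2).matrix_mul hD)

theorem delayedError_eq {z : Circle} (hT2 : T2 z = Ui z * Uo z) :
    delayedError T1 T2 V D z
      = T1 z - Ui z * (Uo z * firFilter V z + (z : ℂ)⁻¹ ^ N • (Uo z * D z)) := by
  simp only [delayedError, hT2, Matrix.mul_add, Matrix.mul_smul, Matrix.smul_mul,
    Matrix.mul_assoc]
  abel

section

variable [Fintype m] [DecidableEq m] [DecidableEq k]

theorem conjTranspose_mul_self_delayedError {z : Circle} (hT2 : T2 z = Ui z * Uo z)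
    (hUi : (Ui z)ᴴ * Ui z = 1) :
    (delayedError T1 T2 V D z)ᴴ * delayedError T1 T2 V D z
      = ((z : ℂ) ^ N • ((Ui z)ᴴ * delayedError T1 T2 V D z))ᴴ
          * ((z : ℂ) ^ N • ((Ui z)ᴴ * delayedError T1 T2 V D z))
        + ((1 - Ui z * (Ui z)ᴴ) * T1 z)ᴴ * ((1 - Ui z * (Ui z)ᴴ) * T1 z) := by
  have hzN : star ((z : ℂ) ^ N) * (z : ℂ) ^ N = 1 := by
    rw [star_pow, ← mul_pow, Complex.star_def, Complex.conj_mul', Circle.norm_coe]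
    simp
  rw [conjTranspose_smul_mul_smul_self hzN, ← one_sub_mul_conjTranspose_mul_sub_mul_of_isometry hUi,
    ← delayedError_eq hT2]
  exact conjTranspose_mul_self_eq_add_of_isometry hUi _

end

variable [Fintype m] [Fintype n] [DecidableEq n]

/-- `R̂_γ(V)` for `Yo = Y_{o,γ}`. -/
def nehariSymbol (Ui : Circle → Matrix m k ℂ) (Uo : Circle → Matrix k k ℂ)
    (T1 : Circle → Matrix m n ℂ) (Yo : Circle → Matrix n n ℂ) (V : Fin N → Matrix k n ℂ)
    (z : Circle) : Matrix k n ℂ :=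
  (z : ℂ) ^ N • ((Ui z)ᴴ * T1 z * (Yo z)⁻¹) - Uo z * ((z : ℂ) ^ N • firFilter V z) * (Yo z)⁻¹

theorem continuous_nehariSymbol (hT1 : Continuous T1) (hUi : Continuous Ui)
    (hUo : Continuous Uo) (hYo : Continuous Yo) (hYoUnit : ∀ z, IsUnit (Yo z)) :
    Continuous (nehariSymbol Ui Uo T1 Yo V) := by
  have hYoInv := hYo.matrix_inv hYoUnit
  exact ((continuous_subtype_val.pow N).smul
      ((hUi.matrix_conjTranspose.matrix_mul hT1).matrix_mul hYoInv)).sub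
    ((hUo.matrix_mul ((continuous_subtype_val.pow N).smul (continuous_firFilter V))).matrix_mul
      hYoInv)

variable [DecidableEq k]

theorem nehariSymbol_sub_eq {z : Circle} (hT2 : T2 z = Ui z * Uo z)
    (hUi : (Ui z)ᴴ * Ui z = 1) :
    nehariSymbol Ui Uo T1 Yo V z - Uo z * D z * (Yo z)⁻¹
      = ((z : ℂ) ^ N • ((Ui z)ᴴ * delayedError T1 T2 V D z)) * (Yo z)⁻¹ := by
  have hzN : (z : ℂ) ^ N * (z : ℂ)⁻¹ ^ N = 1 := by
    rw [← mul_pow, mul_inv_cancel₀ (Circle.coe_ne_zero z), one_pow]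
  rw [delayedError_eq hT2, conjTranspose_mul_sub_mul_of_isometry hUi]
  simp only [nehariSymbol, smul_sub, smul_add, smul_smul, hzN, one_smul, Matrix.sub_mul,
    Matrix.add_mul, Matrix.smul_mul, Matrix.mul_smul, Matrix.mul_assoc]
  abel

variable [DecidableEq m]

theorem hinfNorm_le_hinfNorm_delayedError (hT1 : Continuous T1) (hT2c : Continuous T2)
    (hT2 : ∀ z, T2 z = Ui z * Uo z) (hUi : ∀ z, (Ui z)ᴴ * Ui z = 1) (hDc : Continuous D) :
    (hinfNorm fun z => (1 - Ui z * (Ui z)ᴴ) * T1 z) ≤ hinfNorm (delayedError T1 T2 V D) :=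
  hinfNorm_le fun z =>
    (norm_le_of_conjTranspose_mul_self_eq_add
      (conjTranspose_mul_self_delayedError (hT2 z) (hUi z))).trans
        (specNorm_le_hinfNorm (continuous_delayedError hT1 hT2c hDc) z)

theorem exists_hinfNorm_delayedError_le_of_distHInf_lt (hγ : 0 ≤ γ) (hT1 : Continuous T1)
    (hT2 : ∀ z, T2 z = Ui z * Uo z) (hUic : Continuous Ui) (hUi : ∀ z, (Ui z)ᴴ * Ui z = 1)
    (hUoc : Continuous Uo) (hUoUnit : ∀ z, IsUnit (Uo z)) (hUoInvH : MemHInf fun z => (Uo z)⁻¹)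
    (hYoc : Continuous Yo) (hYoUnit : ∀ z, IsUnit (Yo z)) (hYoH : MemHInf Yo)
    (hYo : ∀ z, (Yo z)ᴴ * Yo z = (γ : ℂ) ^ 2 • (1 : Matrix n n ℂ)
      - ((1 - Ui z * (Ui z)ᴴ) * T1 z)ᴴ * ((1 - Ui z * (Ui z)ᴴ) * T1 z))
    (h : distHInf (nehariSymbol Ui Uo T1 Yo V) < 1) :
    ∃ D : Circle → Matrix k n ℂ, Continuous D ∧ MemHInf D ∧
      hinfNorm (delayedError T1 T2 V D) ≤ γ := by
  obtain ⟨X, hXc, hXH, hX⟩ := exists_hinfNorm_sub_lt_of_distHInf_lt h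
  refine ⟨fun z => (Uo z)⁻¹ * X z * Yo z,
    ((hUoc.matrix_inv hUoUnit).matrix_mul hXc).matrix_mul hYoc,
    (hUoInvH.mul hXH).mul hYoH, hinfNorm_le fun z => ?_⟩
  have hUoD : Uo z * ((Uo z)⁻¹ * X z * Yo z) * (Yo z)⁻¹ = X z := by
    rw [← Matrix.mul_assoc (Uo z),
      mul_nonsing_inv_cancel_right _ _ ((isUnit_iff_isUnit_det _).mp (hYoUnit z)),
      mul_nonsing_inv_cancel_left _ _ ((isUnit_iff_isUnit_det _).mp (hUoUnit z))]
  refine norm_le_of_norm_mul_inv_le_one hγ (conjTranspose_mul_self_delayedError (hT2 z) (hUi z))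
    (hYo z) (hYoUnit z) ?_
  rw [← nehariSymbol_sub_eq (hT2 z) (hUi z), hUoD]
  exact (specNorm_le_hinfNorm
    ((continuous_nehariSymbol hT1 hUic hUoc hYoc hYoUnit).sub hXc) z).trans hX.le

theorem distHInf_lt_one_of_hinfNorm_delayedError_lt (hT1 : Continuous T1)
    (hT2c : Continuous T2) (hT2 : ∀ z, T2 z = Ui z * Uo z) (hUi : ∀ z, (Ui z)ᴴ * Ui z = 1)
    (hUoc : Continuous Uo) (hUoH : MemHInf Uo) (hYoc : Continuous Yo)
    (hYoUnit : ∀ z, IsUnit (Yo z)) (hYoInvH : MemHInf fun z => (Yo z)⁻¹)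
    (hYo : ∀ z, (Yo z)ᴴ * Yo z = (γ : ℂ) ^ 2 • (1 : Matrix n n ℂ)
      - ((1 - Ui z * (Ui z)ᴴ) * T1 z)ᴴ * ((1 - Ui z * (Ui z)ᴴ) * T1 z))
    (hDc : Continuous D) (hDH : MemHInf D) (hlt : hinfNorm (delayedError T1 T2 V D) < γ) :
    distHInf (nehariSymbol Ui Uo T1 Yo V) < 1 := by
  have hγ : 0 < γ := (hinfNorm_nonneg _).trans_lt hlt
  refine (distHInf_le (X := fun z => Uo z * D z * (Yo z)⁻¹)
    ((hUoc.matrix_mul hDc).matrix_mul (hYoc.matrix_inv hYoUnit))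
    ((hUoH.mul hDH).mul hYoInvH)).trans_lt ((hinfNorm_le fun z => ?_).trans_lt
      ((div_lt_one hγ).2 hlt))
  rw [specNorm_eq_norm, nehariSymbol_sub_eq (hT2 z) (hUi z)]
  exact norm_mul_inv_le_div hγ hlt.le (conjTranspose_mul_self_delayedError (hT2 z) (hUi z))
    (hYo z) (hYoUnit z) (specNorm_le_hinfNorm (continuous_delayedError hT1 hT2c hDc) z)

end DelayedModelMatching

theorem distributed_hinf_identity_optimal_general (N : ℕ) (q1 p1 p2 : ℕ)
    (𝒴 : Fin N → Submodule ℂ (Matrix (Fin p2) (Fin p1) ℂ))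
    (T1 : Circle → Matrix (Fin q1) (Fin p1) ℂ) (hT1 : Continuous T1)
    (T2 : Circle → Matrix (Fin q1) (Fin p2) ℂ) (hT2 : Continuous T2)
    (Ui : Circle → Matrix (Fin q1) (Fin p2) ℂ) (hUic : Continuous Ui)
    (hUiInner : ∀ z, (Ui z)ᴴ * Ui z = 1)
    (Uo : Circle → Matrix (Fin p2) (Fin p2) ℂ) (hUoc : Continuous Uo)
    (hUoH : MemHInf Uo) (hUoUnit : ∀ z, IsUnit (Uo z))
    (hUoInvH : MemHInf fun z => (Uo z)⁻¹)
    (hT2fact : ∀ z, T2 z = Ui z * Uo z)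
    (Y : Circle → Matrix (Fin q1) (Fin p1) ℂ)
    (hY : Y = fun z => (1 - Ui z * (Ui z)ᴴ) * T1 z)
    (Yo : ℝ → Circle → Matrix (Fin p1) (Fin p1) ℂ)
    (hYoc : ∀ γ, hinfNorm Y < γ → Continuous (Yo γ))
    (hYoUnit : ∀ γ, hinfNorm Y < γ → ∀ z, IsUnit (Yo γ z))
    (hYoH : ∀ γ, hinfNorm Y < γ → MemHInf (Yo γ))
    (hYoInvH : ∀ γ, hinfNorm Y < γ → MemHInf fun z => (Yo γ z)⁻¹)
    (hYofact : ∀ γ, hinfNorm Y < γ → ∀ z, (Yo γ z)ᴴ * Yo γ z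
      = ((γ : ℂ) ^ 2) • (1 : Matrix (Fin p1) (Fin p1) ℂ) - (Y z)ᴴ * Y z)
    (R : ℝ → Circle → Matrix (Fin p2) (Fin p1) ℂ)
    (hR : R = fun γ z => (Ui z)ᴴ * T1 z * (Yo γ z)⁻¹)
    (Rhat : ℝ → (Fin N → Matrix (Fin p2) (Fin p1) ℂ) →
      Circle → Matrix (Fin p2) (Fin p1) ℂ)
    (hRhat : Rhat = fun γ V (z : Circle) =>
      ((z : ℂ) ^ N) • R γ z
        - Uo z * (((z : ℂ) ^ N) • ∑ i : Fin N, ((z : ℂ)⁻¹) ^ (i : ℕ) • V i)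
          * (Yo γ z)⁻¹) :
    sInf {c : ℝ | ∃ V : Fin N → Matrix (Fin p2) (Fin p1) ℂ, (∀ i, V i ∈ 𝒴 i) ∧
        ∃ D : Circle → Matrix (Fin p2) (Fin p1) ℂ, Continuous D ∧ MemHInf D ∧
          c = hinfNorm fun z : Circle =>
            (T1 z - T2 z * ∑ i : Fin N, ((z : ℂ)⁻¹) ^ (i : ℕ) • V i)
              - (((z : ℂ)⁻¹ ^ N) • T2 z) * D z}
      = sInf {γ : ℝ | hinfNorm Y < γ ∧
          ∃ V : Fin N → Matrix (Fin p2) (Fin p1) ℂ, (∀ i, V i ∈ 𝒴 i) ∧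
            distHInf (Rhat γ V) < 1} := by
  subst hY hR hRhat
  refine csInf_eq_csInf_of_forall_exists_le_of_Ioi_subset
    ⟨_, 0, fun i => (𝒴 i).zero_mem, 0, continuous_const, memHInf_zero, rfl⟩
    ⟨0, by rintro c ⟨V, -, D, -, -, rfl⟩; exact hinfNorm_nonneg _⟩ ?_ ?_
  · rintro γ ⟨hγ, V, hV, hdist⟩
    obtain ⟨D, hDc, hDH, hle⟩ := exists_hinfNorm_delayedError_le_of_distHInf_lt
      ((hinfNorm_nonneg _).trans hγ.le) hT1 hT2fact hUic hUiInner hUoc hUoUnit hUoInvH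
      (hYoc γ hγ) (hYoUnit γ hγ) (hYoH γ hγ) (hYofact γ hγ) hdist
    exact ⟨_, ⟨V, hV, D, hDc, hDH, rfl⟩, hle⟩
  · rintro c ⟨V, hV, D, hDc, hDH, rfl⟩ γ hγ
    have hYγ := (hinfNorm_le_hinfNorm_delayedError hT1 hT2 hT2fact hUiInner hDc).trans_lt hγ
    exact ⟨hYγ, V, hV, distHInf_lt_one_of_hinfNorm_delayedError_lt hT1 hT2 hT2fact hUiInner
      hUoc hUoH (hYoc γ hYγ) (hYoUnit γ hYγ) (hYoInvH γ hYγ) (hYofact γ hYγ) hDc hDH hγ⟩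

/-- Distributed H∞ control subject to delays, `T3 = I` case (Theorem 3, part 1):
`inf { ‖(T1 − T2 V) − (z^{−N} T2) D‖∞ : V_i ∈ 𝒴_i, D ∈ H∞ }
  = inf { γ : γ > ‖Y‖∞ and ∃ V_i ∈ 𝒴_i with dist(R̂_γ(V), H∞) < 1 }`. -/
theorem distributed_hinf_identity_optimal (N : ℕ) (hN : 1 ≤ N) (q1 p1 p2 : ℕ)
    (𝒴 : Fin N → Submodule ℂ (Matrix (Fin p2) (Fin p1) ℂ))
    (T1 : Circle → Matrix (Fin q1) (Fin p1) ℂ) (hT1 : Continuous T1)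
    (T2 : Circle → Matrix (Fin q1) (Fin p2) ℂ) (hT2 : Continuous T2)
    (Ui : Circle → Matrix (Fin q1) (Fin p2) ℂ) (hUic : Continuous Ui)
    (hUiInner : ∀ z, (Ui z)ᴴ * Ui z = 1) (hUiH : MemHInf Ui)
    (Uo : Circle → Matrix (Fin p2) (Fin p2) ℂ) (hUoc : Continuous Uo)
    (hUoH : MemHInf Uo) (hUoUnit : ∀ z, IsUnit (Uo z))
    (hUoInvH : MemHInf fun z => (Uo z)⁻¹)
    (hT2fact : ∀ z, T2 z = Ui z * Uo z)
    (Y : Circle → Matrix (Fin q1) (Fin p1) ℂ)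
    (hY : Y = fun z => (1 - Ui z * (Ui z)ᴴ) * T1 z)
    (Yo : ℝ → Circle → Matrix (Fin p1) (Fin p1) ℂ)
    (hYoc : ∀ γ, hinfNorm Y < γ → Continuous (Yo γ))
    (hYoUnit : ∀ γ, hinfNorm Y < γ → ∀ z, IsUnit (Yo γ z))
    (hYoH : ∀ γ, hinfNorm Y < γ → MemHInf (Yo γ))
    (hYoInvH : ∀ γ, hinfNorm Y < γ → MemHInf fun z => (Yo γ z)⁻¹)
    (hYofact : ∀ γ, hinfNorm Y < γ → ∀ z, (Yo γ z)ᴴ * Yo γ z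
      = ((γ : ℂ) ^ 2) • (1 : Matrix (Fin p1) (Fin p1) ℂ) - (Y z)ᴴ * Y z)
    (R : ℝ → Circle → Matrix (Fin p2) (Fin p1) ℂ)
    (hR : R = fun γ z => (Ui z)ᴴ * T1 z * (Yo γ z)⁻¹)
    (Rhat : ℝ → (Fin N → Matrix (Fin p2) (Fin p1) ℂ) →
      Circle → Matrix (Fin p2) (Fin p1) ℂ)
    (hRhat : Rhat = fun γ V (z : Circle) =>
      ((z : ℂ) ^ N) • R γ z
        - Uo z * (((z : ℂ) ^ N) • ∑ i : Fin N, ((z : ℂ)⁻¹) ^ (i : ℕ) • V i)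
          * (Yo γ z)⁻¹) :
    sInf {c : ℝ | ∃ V : Fin N → Matrix (Fin p2) (Fin p1) ℂ, (∀ i, V i ∈ 𝒴 i) ∧
        ∃ D : Circle → Matrix (Fin p2) (Fin p1) ℂ, Continuous D ∧ MemHInf D ∧
          c = hinfNorm fun z : Circle =>
            (T1 z - T2 z * ∑ i : Fin N, ((z : ℂ)⁻¹) ^ (i : ℕ) • V i)
              - (((z : ℂ)⁻¹ ^ N) • T2 z) * D z}
      = sInf {γ : ℝ | hinfNorm Y < γ ∧
          ∃ V : Fin N → Matrix (Fin p2) (Fin p1) ℂ, (∀ i, V i ∈ 𝒴 i) ∧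
            distHInf (Rhat γ V) < 1} :=
  distributed_hinf_identity_optimal_general N q1 p1 p2 𝒴 T1 hT1 T2 hT2 Ui hUic hUiInner Uo hUoc hUoH
    hUoUnit hUoInvH hT2fact Y hY Yo hYoc hYoUnit hYoH hYoInvH hYofact R hR Rhat hRhat
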